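/- arXiv:1802.03676 — 4 statements merged into one kernel-verified Lean document; each statement's English description precedes it below -/
import Mathlib

section
/- Let Ω : ℝ^D → ℝ be bounded below by L and above by U on the simplex Δ^D (i.e. L ≤ Ω(q) ≤ U for all q ∈ Δ^D). Then for every x ∈ ℝ^D, max(x) − U ≤ maxΩ(x) ≤ max(x) − L, where max(x) denotes the maximum coordinate of x. -/
/-- The smoothed max operator: `maxOmega Ω x = sup_{q ∈ Δ^D} (⟨q, x⟩ - Ω q)`. -/
noncomputable def maxOmega (D : ℕ) (Ω : (Fin D → ℝ) → ℝ) (x : Fin D → ℝ) : ℝ :=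
  sSup ((fun q => (∑ i, q i * x i) - Ω q) '' stdSimplex ℝ (Fin D))

/-- if `L ≤ Ω ≤ U` on the simplex, then
`max(x) - U ≤ maxΩ(x) ≤ max(x) - L`. -/
theorem stmt0 (D : ℕ) (hD : 0 < D) (Ω : (Fin D → ℝ) → ℝ) (L U : ℝ)
    (hL : ∀ q ∈ stdSimplex ℝ (Fin D), L ≤ Ω q)
    (hU : ∀ q ∈ stdSimplex ℝ (Fin D), Ω q ≤ U)
    (x : Fin D → ℝ) :
    Finset.univ.sup' ⟨⟨0, hD⟩, Finset.mem_univ _⟩ x - U ≤ maxOmega D Ω x ∧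
      maxOmega D Ω x ≤ Finset.univ.sup' ⟨⟨0, hD⟩, Finset.mem_univ _⟩ x - L := by
  have ne : (Finset.univ : Finset (Fin D)).Nonempty := ⟨⟨0, hD⟩, Finset.mem_univ _⟩
  set M := Finset.univ.sup' ⟨⟨0, hD⟩, Finset.mem_univ _⟩ x with hM
  -- argmax index
  obtain ⟨i₀, -, hi₀⟩ := Finset.exists_mem_eq_sup' ne x
  -- vertex q₀ = Pi.single i₀ 1
  have hq₀ : (Pi.single i₀ 1 : Fin D → ℝ) ∈ stdSimplex ℝ (Fin D) := by
    constructor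
    · intro j
      rcases eq_or_ne j i₀ with rfl | h
      · simp
      · simp [Pi.single_apply, h]
    · simp [Pi.single_apply]
  have hsum : (∑ i, (Pi.single i₀ 1 : Fin D → ℝ) i * x i) = x i₀ := by
    rw [Finset.sum_eq_single i₀]
    · simp
    · intro b _ hb; simp [Pi.single_apply, hb]
    · simp
  -- bounded above
  have hub : ∀ y ∈ ((fun q => (∑ i, q i * x i) - Ω q) '' stdSimplex ℝ (Fin D)), y ≤ M - L := by
    rintro y ⟨q, hq, rfl⟩
    have h1 : (∑ i, q i * x i) ≤ M := by
      calc (∑ i, q i * x i) ≤ ∑ i, q i * M := by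
            apply Finset.sum_le_sum
            intro i _
            exact mul_le_mul_of_nonneg_left (Finset.le_sup' x (Finset.mem_univ i)) (hq.1 i)
        _ = M := by rw [← Finset.sum_mul, hq.2, one_mul]
    have h2 := hL q hq
    dsimp only
    linarith
  have hbdd : BddAbove ((fun q => (∑ i, q i * x i) - Ω q) '' stdSimplex ℝ (Fin D)) := by
    exact ⟨M - L, hub⟩
  have hmem : (x i₀ - Ω (Pi.single i₀ 1)) ∈
      ((fun q => (∑ i, q i * x i) - Ω q) '' stdSimplex ℝ (Fin D)) := by
    exact ⟨_, hq₀, by dsimp only; rw [hsum]⟩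
  constructor
  · have := le_csSup hbdd hmem
    have hU' := hU _ hq₀
    calc M - U = x i₀ - U := by rw [hM, ← hi₀]
      _ ≤ x i₀ - Ω (Pi.single i₀ 1) := by linarith
      _ ≤ maxOmega D Ω x := this
  · exact csSup_le ⟨_, hmem⟩ hub
end

section
/- Let γ > 0 and let Ω(q) = (γ/2) ‖q‖₂². Then for every x ∈ ℝ^D, max(x) − γ/2 ≤ maxΩ(x) ≤ max(x) − γ/(2D), where max(x) is the maximum coordinate of x. -/
/-- for the squared `ℓ₂` regularizer `Ω(q) = (γ/2) ‖q‖₂²` with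
`γ > 0`, one has `max(x) - γ/2 ≤ maxΩ(x) ≤ max(x) - γ/(2D)`. -/
theorem stmt8 (D : ℕ) (hD : 0 < D) (γ : ℝ) (hγ : 0 < γ) (x : Fin D → ℝ) :
    Finset.univ.sup' ⟨⟨0, hD⟩, Finset.mem_univ _⟩ x - γ / 2
      ≤ maxOmega D (fun q => γ / 2 * ∑ i, (q i) ^ 2) x ∧
    maxOmega D (fun q => γ / 2 * ∑ i, (q i) ^ 2) x
      ≤ Finset.univ.sup' ⟨⟨0, hD⟩, Finset.mem_univ _⟩ x - γ / (2 * D) := by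
  set M := Finset.univ.sup' ⟨⟨0, hD⟩, Finset.mem_univ _⟩ x with hM
  set S := ((fun q => (∑ i, q i * x i) - (γ / 2 * ∑ i, (q i) ^ 2)) '' stdSimplex ℝ (Fin D))
    with hS
  have hDpos : (0:ℝ) < D := by exact_mod_cast hD
  -- every element of S is ≤ M - γ/(2D)
  have hub : ∀ y ∈ S, y ≤ M - γ / (2 * D) := by
    rintro y ⟨q, hq, rfl⟩
    obtain ⟨hq0, hq1⟩ := hq
    have h1 : ∑ i, q i * x i ≤ M := by
      calc ∑ i, q i * x i ≤ ∑ i, q i * M := by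
            apply Finset.sum_le_sum
            intro i _
            exact mul_le_mul_of_nonneg_left
              (Finset.le_sup' x (Finset.mem_univ i)) (hq0 i)
        _ = M := by rw [← Finset.sum_mul, hq1, one_mul]
    have h2 : (1:ℝ) / D ≤ ∑ i, (q i) ^ 2 := by
      have := sq_sum_le_card_mul_sum_sq (s := Finset.univ) (f := q)
      rw [hq1] at this
      simp only [Finset.card_univ, Fintype.card_fin, one_pow] at this
      rw [div_le_iff₀ hDpos]
      linarith [this]
    have h3 : γ / (2 * D) ≤ γ / 2 * ∑ i, (q i) ^ 2 := by
      have := mul_le_mul_of_nonneg_left h2 (le_of_lt (half_pos hγ))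
      calc γ / (2 * D) = γ / 2 * (1 / D) := by ring
        _ ≤ _ := this
    linarith
  -- the vertex e_{i₀} where the max is attained
  obtain ⟨i₀, -, hi₀⟩ := Finset.exists_mem_eq_sup' (⟨⟨0, hD⟩, Finset.mem_univ _⟩ :
    Finset.univ.Nonempty) x
  set q₀ : Fin D → ℝ := fun j => if j = i₀ then 1 else 0 with hq₀
  have hq₀mem : q₀ ∈ stdSimplex ℝ (Fin D) := by
    constructor
    · intro i
      simp only [hq₀]
      split <;> norm_num
    · simp [hq₀]
  have hval : (∑ i, q₀ i * x i) - (γ / 2 * ∑ i, (q₀ i) ^ 2) = M - γ / 2 := by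
    have e1 : ∑ i, q₀ i * x i = x i₀ := by
      simp [hq₀, Finset.sum_ite_eq', Finset.mem_univ]
    have e2 : ∑ i, (q₀ i) ^ 2 = 1 := by
      simp [hq₀, ite_pow, Finset.sum_ite_eq', Finset.mem_univ]
    rw [e1, e2, hM, hi₀]; ring
  have hmem : M - γ / 2 ∈ S := ⟨q₀, hq₀mem, hval⟩
  have hbdd : BddAbove S := ⟨M - γ / (2 * D), fun y hy => hub y hy⟩
  constructor
  · exact le_csSup hbdd hmem
  · exact csSup_le ⟨_, hmem⟩ hub
end

section
/- Let ω : [0,1] → ℝ be convex and lower semicontinuous with ω(0) = 0, and for each dimension d define Ω on Δ^d by Ω(q) = Σ_{i=1}^d ω(q_i) and maxΩ(x) = sup_{q ∈ Δ^d} (⟨q, x⟩ − Ω(q)). If maxΩ is associative in the sense that maxΩ( (maxΩ(x₁, x₂), x₃) ) = maxΩ( (x₁, x₂, x₃) ) for all x₁, x₂, x₃ ∈ ℝ, then there exists γ ≥ 0 such that ω(t) = γ t log t for all t ∈ [0,1] (with 0 log 0 = 0); i.e. Ω is a nonnegative multiple of the negative entropy. -/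
/-- The smoothed max operator associated with the separable regularizer
`Ω(q) = ∑ᵢ ω(qᵢ)`: `smax ω x = sup_{q ∈ Δ^d} (⟨q, x⟩ - ∑ᵢ ω(qᵢ))`. -/
noncomputable def smax (ω : ℝ → ℝ) {d : ℕ} (x : Fin d → ℝ) : ℝ :=
  sSup ((fun q => (∑ i, q i * x i) - ∑ i, ω (q i)) '' stdSimplex ℝ (Fin d))


open Real Set Finset Filter

noncomputable def conj' {d : ℕ} (Φ : (Fin d → ℝ) → ℝ) (x : Fin d → ℝ) : ℝ :=
  sSup ((fun q => (∑ i, q i * x i) - Φ q) '' stdSimplex ℝ (Fin d))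

noncomputable def pers (ω : ℝ → ℝ) (a b : ℝ) : ℝ :=
  (a + b) * (ω (a / (a + b)) + ω (b / (a + b)))

noncomputable def Phi1 (ω : ℝ → ℝ) (q : Fin 3 → ℝ) : ℝ :=
  ω (q 2) + ω (q 0 + q 1) + pers ω (q 0) (q 1)

noncomputable def Phi2 (ω : ℝ → ℝ) {d : ℕ} (q : Fin d → ℝ) : ℝ := ∑ i, ω (q i)

lemma coord_mem_Icc {d : ℕ} {q : Fin d → ℝ} (hq : q ∈ stdSimplex ℝ (Fin d)) (i : Fin d) :
    q i ∈ Set.Icc (0:ℝ) 1 := by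
  refine ⟨hq.1 i, ?_⟩
  have := Finset.single_le_sum (f := q) (fun j _ => hq.1 j) (Finset.mem_univ i)
  rw [hq.2] at this; exact this

lemma sum3 {q : Fin 3 → ℝ} (hq : q ∈ stdSimplex ℝ (Fin 3)) : q 0 + q 1 + q 2 = 1 := by
  have := hq.2
  rwa [Fin.sum_univ_three] at this

lemma two_coord_mem {q : Fin 3 → ℝ} (hq : q ∈ stdSimplex ℝ (Fin 3)) :
    q 0 + q 1 ∈ Set.Icc (0:ℝ) 1 :=
  ⟨by have := hq.1 0; have := hq.1 1; linarith,
   by have := hq.1 2; have := sum3 hq; linarith⟩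

lemma div_mem_Icc {a p : ℝ} (ha : 0 ≤ a) (hap : a ≤ p) : a / p ∈ Set.Icc (0:ℝ) 1 := by
  rcases eq_or_lt_of_le (le_trans ha hap) with hp | hp
  · simp [← hp]
  · exact ⟨div_nonneg ha (le_of_lt hp), (div_le_one hp).2 hap⟩


section S2
variable {ω : ℝ → ℝ}

lemma chord' (hconv : ConvexOn ℝ (Set.Icc (0:ℝ) 1) ω) (h0 : ω 0 = 0)
    {t : ℝ} (ht : t ∈ Set.Icc (0:ℝ) 1) : ω t ≤ t * ω 1 := by
  have h := hconv.2 (Set.left_mem_Icc.2 zero_le_one) (Set.right_mem_Icc.2 zero_le_one)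
    (by linarith [ht.2] : (0:ℝ) ≤ 1 - t) ht.1 (by ring)
  simp only [smul_eq_mul, mul_zero, mul_one, h0] at h
  simpa using h

lemma upper_bd (hconv : ConvexOn ℝ (Set.Icc (0:ℝ) 1) ω) (h0 : ω 0 = 0)
    {t : ℝ} (ht : t ∈ Set.Icc (0:ℝ) 1) : ω t ≤ max 0 (ω 1) := by
  have := chord' hconv h0 ht
  rcases le_or_gt (ω 1) 0 with h | h
  · have : t * ω 1 ≤ 0 := mul_nonpos_of_nonneg_of_nonpos ht.1 h
    exact le_trans (chord' hconv h0 ht) (le_trans this (le_max_left _ _))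
  · have : t * ω 1 ≤ ω 1 := by nlinarith [ht.1, ht.2]
    exact le_trans (chord' hconv h0 ht) (le_trans this (le_max_right _ _))

lemma lower_bd (hconv : ConvexOn ℝ (Set.Icc (0:ℝ) 1) ω) (h0 : ω 0 = 0)
    {t : ℝ} (ht : t ∈ Set.Icc (0:ℝ) 1) : 2 * ω (1/2) - max 0 (ω 1) ≤ ω t := by
  have h1t : 1 - t ∈ Set.Icc (0:ℝ) 1 := ⟨by linarith [ht.2], by linarith [ht.1]⟩
  have h := hconv.2 ht h1t (by norm_num : (0:ℝ) ≤ 1/2) (by norm_num : (0:ℝ) ≤ 1/2) (by norm_num)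
  simp only [smul_eq_mul] at h
  have heq : (1:ℝ)/2 * t + 1/2 * (1-t) = 1/2 := by ring
  rw [heq] at h
  have := upper_bd hconv h0 h1t
  linarith

lemma abs_bd (hconv : ConvexOn ℝ (Set.Icc (0:ℝ) 1) ω) (h0 : ω 0 = 0)
    {t : ℝ} (ht : t ∈ Set.Icc (0:ℝ) 1) :
    |ω t| ≤ |2 * ω (1/2) - max 0 (ω 1)| + |max 0 (ω 1)| := by
  have h1 := upper_bd hconv h0 ht
  have h2 := lower_bd hconv h0 ht
  rw [abs_le]; constructor
  · have : -(|2 * ω (1/2) - max 0 (ω 1)|) ≤ 2 * ω (1/2) - max 0 (ω 1) := neg_abs_le _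
    have h3 : (0:ℝ) ≤ |max 0 (ω 1)| := abs_nonneg _
    linarith
  · have : max 0 (ω 1) ≤ |max 0 (ω 1)| := le_abs_self _
    have h3 : (0:ℝ) ≤ |2 * ω (1/2) - max 0 (ω 1)| := abs_nonneg _
    linarith

lemma omega_cont (hconv : ConvexOn ℝ (Set.Icc (0:ℝ) 1) ω)
    (hlsc : LowerSemicontinuousOn ω (Set.Icc (0 : ℝ) 1)) (h0 : ω 0 = 0) :
    ContinuousOn ω (Set.Icc (0:ℝ) 1) := by
  intro t ht
  rcases eq_or_lt_of_le ht.1 with h0t | h0t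
  · -- t = 0
    subst h0t
    rw [ContinuousWithinAt, h0]
    rw [tendsto_order]
    constructor
    · intro c hc
      exact hlsc 0 ht c (by show c < ω 0; rw [h0]; exact hc)
    · intro c hc
      have hub : ∀ᶠ s in nhdsWithin 0 (Set.Icc (0:ℝ) 1), ω s ≤ s * ω 1 :=
        eventually_mem_nhdsWithin.mono (fun s hs => chord' hconv h0 hs)
      have hc' : Continuous (fun s : ℝ => s * ω 1) := continuous_id.mul continuous_const
      have hten : Filter.Tendsto (fun s : ℝ => s * ω 1) (nhdsWithin 0 (Set.Icc (0:ℝ) 1)) (nhds 0) := by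
        simpa using (hc'.tendsto 0).mono_left nhdsWithin_le_nhds
      have := hten.eventually_lt_const hc
      filter_upwards [hub, this] with s h1 h2 using lt_of_le_of_lt h1 h2
  rcases eq_or_lt_of_le ht.2 with h1t | h1t
  · -- t = 1
    subst h1t
    rw [ContinuousWithinAt]
    rw [tendsto_order]
    constructor
    · intro c hc
      exact hlsc 1 ht c hc
    · intro c hc
      have hub : ∀ᶠ s in nhdsWithin 1 (Set.Icc (0:ℝ) 1), ω s ≤ s * ω 1 :=
        eventually_mem_nhdsWithin.mono (fun s hs => chord' hconv h0 hs)
      have hc' : Continuous (fun s : ℝ => s * ω 1) := continuous_id.mul continuous_const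
      have hten : Filter.Tendsto (fun s : ℝ => s * ω 1) (nhdsWithin 1 (Set.Icc (0:ℝ) 1)) (nhds (ω 1)) := by
        simpa using (hc'.tendsto 1).mono_left nhdsWithin_le_nhds
      have := hten.eventually_lt_const hc
      filter_upwards [hub, this] with s hs1 hs2 using lt_of_le_of_lt hs1 hs2
  · -- interior
    have hIoo : ConvexOn ℝ (Set.Ioo (0:ℝ) 1) ω := hconv.subset Set.Ioo_subset_Icc_self (convex_Ioo _ _)
    have := (hIoo.continuousOn isOpen_Ioo) t ⟨h0t, h1t⟩
    have hat : ContinuousAt ω t := this.continuousAt (isOpen_Ioo.mem_nhds ⟨h0t, h1t⟩)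
    exact hat.continuousWithinAt

end S2


lemma fm {d : ℕ} {Φ : (Fin d → ℝ) → ℝ}
    (hconv : ConvexOn ℝ (stdSimplex ℝ (Fin d)) Φ)
    (hcont : ContinuousOn Φ (stdSimplex ℝ (Fin d)))
    {q₀ : Fin d → ℝ} (hq₀ : q₀ ∈ stdSimplex ℝ (Fin d)) {r : ℝ} (hr : r < Φ q₀) :
    ∃ x : Fin d → ℝ, ∀ q ∈ stdSimplex ℝ (Fin d),
      (∑ i, q i * x i) - Φ q ≤ (∑ i, q₀ i * x i) - r := by
  set K := stdSimplex ℝ (Fin d) with hK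
  set epi : Set ((Fin d → ℝ) × ℝ) := {z | z.1 ∈ K ∧ Φ z.1 ≤ z.2} with hepi
  have hclosed : IsClosed epi := by
    apply IsSeqClosed.isClosed
    intro u z hu huz
    have hfst : Filter.Tendsto (fun n => (u n).1) atTop (nhds z.1) :=
      (continuous_fst.tendsto z).comp huz
    have hsnd : Filter.Tendsto (fun n => (u n).2) atTop (nhds z.2) :=
      (continuous_snd.tendsto z).comp huz
    have hz1 : z.1 ∈ K := (isClosed_stdSimplex ℝ (Fin d)).mem_of_tendsto hfst
      (Filter.Eventually.of_forall fun n => (hu n).1)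
    refine ⟨hz1, ?_⟩
    have hfst' : Filter.Tendsto (fun n => (u n).1) atTop (nhdsWithin z.1 K) :=
      tendsto_nhdsWithin_of_tendsto_nhds_of_eventually_within _ hfst
        (Filter.Eventually.of_forall fun n => (hu n).1)
    have hΦ : Filter.Tendsto (fun n => Φ (u n).1) atTop (nhds (Φ z.1)) :=
      (hcont z.1 hz1).tendsto.comp hfst'
    exact le_of_tendsto_of_tendsto' hΦ hsnd fun n => (hu n).2
  have hconvepi : Convex ℝ epi := hconv.convex_epigraph
  have hnot : ((q₀, r) : (Fin d → ℝ) × ℝ) ∉ epi := fun h => absurd h.2 (not_le.2 hr)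
  obtain ⟨f, u, hfu, hepilt⟩ := geometric_hahn_banach_point_closed hconvepi hclosed hnot
  set β := f (0, 1) with hβ
  set y : Fin d → ℝ := fun i => f ((fun j => if i = j then (1:ℝ) else 0), 0) with hy
  have hexp : ∀ (q : Fin d → ℝ) (t : ℝ), f (q, t) = (∑ i, q i * y i) + t * β := by
    intro q t
    have hdecomp : ((q, t) : (Fin d → ℝ) × ℝ)
        = (∑ i, q i • (((fun j => if i = j then (1:ℝ) else 0) : Fin d → ℝ), (0:ℝ)))
          + t • ((0 : Fin d → ℝ), (1:ℝ)) := by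
      refine Prod.ext ?_ ?_
      · simp only [Prod.fst_add, Prod.fst_sum, Prod.smul_fst, Prod.smul_snd, smul_zero]
        simpa using pi_eq_sum_univ q
      · simp [Prod.snd_sum]
    rw [hdecomp, map_add, map_smul, map_sum]
    simp only [map_smul, smul_eq_mul]
    rfl
  have hepival : ∀ q ∈ K, u < (∑ i, q i * y i) + Φ q * β := by
    intro q hq
    have := hepilt (q, Φ q) ⟨hq, le_refl _⟩
    rwa [hexp] at this
  have hq₀val : (∑ i, q₀ i * y i) + r * β < u := by
    rw [← hexp]; exact hfu
  have hβpos : 0 < β := by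
    rcases lt_trichotomy β 0 with h | h | h
    · exfalso
      set A := ∑ i, q₀ i * y i with hA
      have hAt : ∀ t, Φ q₀ ≤ t → u < A + t * β := by
        intro t ht
        have := hepilt (q₀, t) ⟨hq₀, ht⟩
        rwa [hexp] at this
      set t₀ := (u - A - 1) / β with ht₀
      have ht₀β : t₀ * β = u - A - 1 := div_mul_cancel₀ _ (ne_of_lt h)
      have hmax : t₀ ≤ max (Φ q₀) t₀ := le_max_right _ _
      have hmul : max (Φ q₀) t₀ * β ≤ t₀ * β := mul_le_mul_of_nonpos_right hmax (le_of_lt h)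
      have := hAt (max (Φ q₀) t₀) (le_max_left _ _)
      linarith
    · exfalso
      have h1 := hepival q₀ hq₀
      rw [h] at h1 hq₀val
      simp at h1 hq₀val
      linarith
    · exact h
  refine ⟨fun i => -(y i) / β, ?_⟩
  have hxq : ∀ q : Fin d → ℝ, (∑ i, q i * (-(y i) / β)) = -((∑ i, q i * y i) / β) := by
    intro q
    have h1 : ∀ i ∈ Finset.univ, q i * (-(y i) / β) = -(q i * y i) / β := by
      intro i _; ring
    rw [Finset.sum_congr rfl h1, ← Finset.sum_div, ← neg_div]
    congr 1
    exact Finset.sum_neg_distrib _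
  intro q hq
  have h1 := hepival q hq
  rw [hxq, hxq]
  set Sq := ∑ i, q i * y i
  set S₀ := ∑ i, q₀ i * y i
  have hβne : β ≠ 0 := ne_of_gt hβpos
  have hexp1 : (Sq - u + β * Φ q) / β = Sq / β - u / β + Φ q := by field_simp
  have hp1 : 0 < (Sq - u + β * Φ q) / β := div_pos (by nlinarith) hβpos
  have hexp2 : (u - S₀ - β * r) / β = u / β - S₀ / β - r := by field_simp
  have hp2 : 0 < (u - S₀ - β * r) / β := div_pos (by nlinarith) hβpos
  linarith



lemma conj_le_on_simplex {d : ℕ} {Φ Ψ : (Fin d → ℝ) → ℝ}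
    (hΦconv : ConvexOn ℝ (stdSimplex ℝ (Fin d)) Φ)
    (hΦcont : ContinuousOn Φ (stdSimplex ℝ (Fin d)))
    (hΨcont : ContinuousOn Ψ (stdSimplex ℝ (Fin d)))
    (h : ∀ x, conj' Φ x = conj' Ψ x) {q₀ : Fin d → ℝ}
    (hq₀ : q₀ ∈ stdSimplex ℝ (Fin d)) : Φ q₀ ≤ Ψ q₀ := by
  refine le_of_forall_lt fun c hc => ?_
  obtain ⟨x, hx⟩ := fm hΦconv hΦcont hq₀ (show (c + Φ q₀)/2 < Φ q₀ by linarith)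
  have hne : (stdSimplex ℝ (Fin d)).Nonempty := ⟨q₀, hq₀⟩
  have h1 : conj' Φ x ≤ (∑ i, q₀ i * x i) - (c + Φ q₀)/2 := by
    apply csSup_le (hne.image _)
    rintro _ ⟨q, hq, rfl⟩
    exact hx q hq
  have hlin : Continuous (fun q : Fin d → ℝ => ∑ i, q i * x i) :=
    continuous_finset_sum _ fun i _ => (continuous_apply i).mul continuous_const
  have hBdd : BddAbove ((fun q => (∑ i, q i * x i) - Ψ q) '' stdSimplex ℝ (Fin d)) :=
    (isCompact_stdSimplex ℝ (Fin d)).bddAbove_image (hlin.continuousOn.sub hΨcont)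
  have h2 : (∑ i, q₀ i * x i) - Ψ q₀ ≤ conj' Ψ x := le_csSup hBdd ⟨q₀, hq₀, rfl⟩
  rw [← h] at h2
  have := le_trans h2 h1
  linarith

section Conv
variable {ω : ℝ → ℝ}

lemma pers_ineq (hconv : ConvexOn ℝ (Set.Icc (0:ℝ) 1) ω) {a b a' b' u v : ℝ} (ha : 0 ≤ a) (hb : 0 ≤ b) (hab : a + b ≤ 1)
    (ha' : 0 ≤ a') (hb' : 0 ≤ b') (hab' : a' + b' ≤ 1)
    (hu : 0 ≤ u) (hv : 0 ≤ v) (huv : u + v = 1) :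
    pers ω (u*a + v*a') (u*b + v*b') ≤ u * pers ω a b + v * pers ω a' b' := by
  set p := a + b with hp
  set p' := a' + b' with hp'
  set P := u*p + v*p' with hP
  have hp0 : 0 ≤ p := by linarith
  have hp'0 : 0 ≤ p' := by linarith
  have hP0 : 0 ≤ P := by positivity
  rcases eq_or_lt_of_le hP0 with hPz | hPpos
  · -- P = 0
    have h1 : (0:ℝ) ≤ u * p := mul_nonneg hu hp0
    have h2 : (0:ℝ) ≤ v * p' := mul_nonneg hv hp'0
    have hup : u * p = 0 := by linarith
    have hvp : v * p' = 0 := by linarith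
    have h3 : (0:ℝ) ≤ u * a := mul_nonneg hu ha
    have h4 : (0:ℝ) ≤ v * a' := mul_nonneg hv ha'
    have h5 : (0:ℝ) ≤ u * b := mul_nonneg hu hb
    have h6 : (0:ℝ) ≤ v * b' := mul_nonneg hv hb'
    have h7 : u * a + u * b = u * p := by rw [hp]; ring
    have h8 : v * a' + v * b' = v * p' := by rw [hp']; ring
    have hA : u*a + v*a' = 0 := by linarith
    have hB : u*b + v*b' = 0 := by linarith
    have hL : pers ω (u*a + v*a') (u*b + v*b') = 0 := by
      rw [hA, hB]; simp [pers]
    have hR1 : u * pers ω a b = 0 := by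
      rcases mul_eq_zero.1 hup with h | h
      · rw [h, zero_mul]
      · have ha0 : a = 0 := by linarith
        have hb0 : b = 0 := by linarith
        rw [ha0, hb0]; simp [pers]
    have hR2 : v * pers ω a' b' = 0 := by
      rcases mul_eq_zero.1 hvp with h | h
      · rw [h, zero_mul]
      · have ha0 : a' = 0 := by linarith
        have hb0 : b' = 0 := by linarith
        rw [ha0, hb0]; simp [pers]
    rw [hL, hR1, hR2]; norm_num
  · -- P > 0
    have hPne : P ≠ 0 := ne_of_gt hPpos
    have hw₁0 : (0:ℝ) ≤ u*p/P := by positivity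
    have hw₂0 : (0:ℝ) ≤ v*p'/P := by positivity
    have hw : u*p/P + v*p'/P = 1 := by
      rw [← add_div, hP, div_self hPne]
    have hs₁ : a / p ∈ Set.Icc (0:ℝ) 1 := div_mem_Icc ha (by linarith)
    have ht₁ : b / p ∈ Set.Icc (0:ℝ) 1 := div_mem_Icc hb (by linarith)
    have hs₂ : a' / p' ∈ Set.Icc (0:ℝ) 1 := div_mem_Icc ha' (by linarith)
    have ht₂ : b' / p' ∈ Set.Icc (0:ℝ) 1 := div_mem_Icc hb' (by linarith)
    have hcomb : ∀ c c' : ℝ, 0 ≤ c → c ≤ p → 0 ≤ c' → c' ≤ p' →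
        (u*c + v*c')/P = (u*p/P) * (c/p) + (v*p'/P) * (c'/p') := by
      intro c c' hc hcp hc' hcp'
      have h1 : (u*p/P) * (c/p) = u*c/P := by
        rcases eq_or_lt_of_le hp0 with h | h
        · have hc0 : c = 0 := by linarith
          rw [hc0, ← h]
          simp
        · field_simp
      have h2 : (v*p'/P) * (c'/p') = v*c'/P := by
        rcases eq_or_lt_of_le hp'0 with h | h
        · have hc0 : c' = 0 := by linarith
          rw [hc0, ← h]
          simp
        · field_simp
      rw [h1, h2, ← add_div]
    have hA := hconv.2 hs₁ hs₂ hw₁0 hw₂0 hw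
    have hB := hconv.2 ht₁ ht₂ hw₁0 hw₂0 hw
    simp only [smul_eq_mul] at hA hB
    rw [← hcomb a a' ha (by linarith) ha' (by linarith)] at hA
    rw [← hcomb b b' hb (by linarith) hb' (by linarith)] at hB
    have hsum : ω ((u*a + v*a')/P) + ω ((u*b + v*b')/P)
        ≤ (u*p/P) * (ω (a/p) + ω (b/p)) + (v*p'/P) * (ω (a'/p') + ω (b'/p')) := by linarith
    have hmul := mul_le_mul_of_nonneg_left hsum (le_of_lt hPpos)
    have hLHS : pers ω (u*a + v*a') (u*b + v*b')
        = P * (ω ((u*a + v*a')/P) + ω ((u*b + v*b')/P)) := by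
      have hAB : u*a + v*a' + (u*b + v*b') = P := by rw [hP, hp, hp']; ring
      rw [pers, hAB]
    have hRHS : P * ((u*p/P) * (ω (a/p) + ω (b/p)) + (v*p'/P) * (ω (a'/p') + ω (b'/p')))
        = u * pers ω a b + v * pers ω a' b' := by
      have e1 : P * (u*p/P) = u * p := by field_simp
      have e2 : P * (v*p'/P) = v * p' := by field_simp
      calc P * ((u*p/P) * (ω (a/p) + ω (b/p)) + (v*p'/P) * (ω (a'/p') + ω (b'/p')))
          = (P * (u*p/P)) * (ω (a/p) + ω (b/p)) + (P * (v*p'/P)) * (ω (a'/p') + ω (b'/p')) := by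
            ring
        _ = u * (p * (ω (a/p) + ω (b/p))) + v * (p' * (ω (a'/p') + ω (b'/p'))) := by
            rw [e1, e2]; ring
        _ = u * pers ω a b + v * pers ω a' b' := by rw [pers, pers, ← hp, ← hp']
    rw [hLHS, ← hRHS]
    exact hmul

lemma phi1_convex (hconv : ConvexOn ℝ (Set.Icc (0:ℝ) 1) ω) : ConvexOn ℝ (stdSimplex ℝ (Fin 3)) (Phi1 ω) := by
  refine ⟨convex_stdSimplex ℝ (Fin 3), ?_⟩
  intro q hq q' hq' u v hu hv huv
  simp only [Phi1, Pi.add_apply, Pi.smul_apply, smul_eq_mul]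
  have h1 := hconv.2 (coord_mem_Icc hq 2) (coord_mem_Icc hq' 2) hu hv huv
  simp only [smul_eq_mul] at h1
  have h2 := hconv.2 (two_coord_mem hq) (two_coord_mem hq') hu hv huv
  simp only [smul_eq_mul] at h2
  have h3 := pers_ineq hconv (hq.1 0) (hq.1 1) (two_coord_mem hq).2
    (hq'.1 0) (hq'.1 1) (two_coord_mem hq').2 hu hv huv
  have e2 : u * q 0 + v * q' 0 + (u * q 1 + v * q' 1) = u * (q 0 + q 1) + v * (q' 0 + q' 1) := by
    ring
  rw [e2]
  calc ω (u * q 2 + v * q' 2) + ω (u * (q 0 + q 1) + v * (q' 0 + q' 1))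
        + pers ω (u * q 0 + v * q' 0) (u * q 1 + v * q' 1)
      ≤ (u * ω (q 2) + v * ω (q' 2)) + (u * ω (q 0 + q 1) + v * ω (q' 0 + q' 1))
        + (u * pers ω (q 0) (q 1) + v * pers ω (q' 0) (q' 1)) := by
        exact add_le_add (add_le_add h1 h2) h3
    _ = u * (ω (q 2) + ω (q 0 + q 1) + pers ω (q 0) (q 1))
        + v * (ω (q' 2) + ω (q' 0 + q' 1) + pers ω (q' 0) (q' 1)) := by ring

lemma phi2_convex (hconv : ConvexOn ℝ (Set.Icc (0:ℝ) 1) ω) {d : ℕ} : ConvexOn ℝ (stdSimplex ℝ (Fin d)) (Phi2 ω) := by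
  refine ⟨convex_stdSimplex ℝ (Fin d), ?_⟩
  intro q hq q' hq' u v hu hv huv
  simp only [Phi2, Pi.add_apply, Pi.smul_apply, smul_eq_mul]
  calc ∑ i, ω (u * q i + v * q' i) ≤ ∑ i, (u * ω (q i) + v * ω (q' i)) := by
        apply Finset.sum_le_sum
        intro i _
        have := hconv.2 (coord_mem_Icc hq i) (coord_mem_Icc hq' i) hu hv huv
        simpa using this
    _ = u * ∑ i, ω (q i) + v * ∑ i, ω (q' i) := by
        rw [Finset.sum_add_distrib, ← Finset.mul_sum, ← Finset.mul_sum]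

end Conv

section Cont
variable {ω : ℝ → ℝ} {C : ℝ}

lemma phi2_cont (hcont : ContinuousOn ω (Set.Icc (0:ℝ) 1)) {d : ℕ} : ContinuousOn (Phi2 ω (d := d)) (stdSimplex ℝ (Fin d)) := by
  apply continuousOn_finset_sum
  intro i _
  exact hcont.comp (continuous_apply i).continuousOn (fun q hq => coord_mem_Icc hq i)

lemma pers_cont (hcont : ContinuousOn ω (Set.Icc (0:ℝ) 1)) (habs : ∀ t ∈ Set.Icc (0:ℝ) 1, |ω t| ≤ C) : ContinuousOn (fun q : Fin 3 → ℝ => pers ω (q 0) (q 1))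
    (stdSimplex ℝ (Fin 3)) := by
  have hC0 : 0 ≤ C := le_trans (abs_nonneg _) (habs 0 (by norm_num))
  intro q hq
  by_cases hp : q 0 + q 1 = 0
  · have hq0 : q 0 = 0 := by have := hq.1 0; have := hq.1 1; linarith
    have hq1 : q 1 = 0 := by have := hq.1 0; have := hq.1 1; linarith
    have hval : pers ω (q 0) (q 1) = 0 := by rw [hq0, hq1]; simp [pers]
    rw [ContinuousWithinAt, hval]
    apply squeeze_zero_norm'
    · filter_upwards [eventually_mem_nhdsWithin] with q' hq'
      have h01 : (0:ℝ) ≤ q' 0 + q' 1 := by have := hq'.1 0; have := hq'.1 1; linarith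
      have hd0 : q' 0 / (q' 0 + q' 1) ∈ Set.Icc (0:ℝ) 1 :=
        div_mem_Icc (hq'.1 0) (by have := hq'.1 1; linarith)
      have hd1 : q' 1 / (q' 0 + q' 1) ∈ Set.Icc (0:ℝ) 1 :=
        div_mem_Icc (hq'.1 1) (by have := hq'.1 0; linarith)
      calc ‖pers ω (q' 0) (q' 1)‖
          = |q' 0 + q' 1| * |ω (q' 0 / (q' 0 + q' 1)) + ω (q' 1 / (q' 0 + q' 1))| := by
            rw [pers]; exact abs_mul _ _
        _ ≤ (q' 0 + q' 1) * (2*C) := by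
            rw [abs_of_nonneg h01]
            apply mul_le_mul_of_nonneg_left _ h01
            calc |ω (q' 0 / (q' 0 + q' 1)) + ω (q' 1 / (q' 0 + q' 1))|
                ≤ |ω (q' 0 / (q' 0 + q' 1))| + |ω (q' 1 / (q' 0 + q' 1))| := abs_add_le _ _
              _ ≤ 2*C := by have := habs _ hd0; have := habs _ hd1; linarith
    · have hcg : Continuous (fun q' : Fin 3 → ℝ => (q' 0 + q' 1) * (2*C)) :=
        ((continuous_apply 0).add (continuous_apply 1)).mul continuous_const
      have := (hcg.tendsto q).mono_left (nhdsWithin_le_nhds (s := stdSimplex ℝ (Fin 3)))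
      rw [hp] at this
      simpa using this
  · have hden : ContinuousWithinAt (fun q' : Fin 3 → ℝ => q' 0 + q' 1)
        (stdSimplex ℝ (Fin 3)) q := ((continuous_apply 0).add (continuous_apply 1)).continuousWithinAt
    have hm0 : q 0 / (q 0 + q 1) ∈ Set.Icc (0:ℝ) 1 :=
      div_mem_Icc (a := q 0) (p := q 0 + q 1) (hq.1 0) (by have := hq.1 1; linarith)
    have hm1 : q 1 / (q 0 + q 1) ∈ Set.Icc (0:ℝ) 1 :=
      div_mem_Icc (a := q 1) (p := q 0 + q 1) (hq.1 1) (by have := hq.1 0; linarith)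
    have hd0 : ContinuousWithinAt (fun q' : Fin 3 → ℝ => q' 0 / (q' 0 + q' 1))
        (stdSimplex ℝ (Fin 3)) q := (continuous_apply 0).continuousWithinAt.div hden hp
    have hd1 : ContinuousWithinAt (fun q' : Fin 3 → ℝ => q' 1 / (q' 0 + q' 1))
        (stdSimplex ℝ (Fin 3)) q := (continuous_apply 1).continuousWithinAt.div hden hp
    have h0 : ContinuousWithinAt (fun q' : Fin 3 → ℝ => ω (q' 0 / (q' 0 + q' 1)))
        (stdSimplex ℝ (Fin 3)) q :=
      ContinuousWithinAt.comp (f := fun q' : Fin 3 → ℝ => q' 0 / (q' 0 + q' 1)) (g := ω)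
        (hcont _ hm0) hd0
        (fun q' hq' => div_mem_Icc (hq'.1 0) (by have := hq'.1 1; linarith))
    have h1 : ContinuousWithinAt (fun q' : Fin 3 → ℝ => ω (q' 1 / (q' 0 + q' 1)))
        (stdSimplex ℝ (Fin 3)) q :=
      ContinuousWithinAt.comp (f := fun q' : Fin 3 → ℝ => q' 1 / (q' 0 + q' 1)) (g := ω)
        (hcont _ hm1) hd1
        (fun q' hq' => div_mem_Icc (hq'.1 1) (by have := hq'.1 0; linarith))
    exact hden.mul (h0.add h1)

lemma phi1_cont (hcont : ContinuousOn ω (Set.Icc (0:ℝ) 1)) (habs : ∀ t ∈ Set.Icc (0:ℝ) 1, |ω t| ≤ C) : ContinuousOn (Phi1 ω) (stdSimplex ℝ (Fin 3)) := by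
  apply ContinuousOn.add
  apply ContinuousOn.add
  · exact hcont.comp (continuous_apply 2).continuousOn (fun q hq => coord_mem_Icc hq 2)
  · exact hcont.comp ((continuous_apply 0).add (continuous_apply 1)).continuousOn
      (fun q hq => two_coord_mem hq)
  · exact pers_cont hcont habs

end Cont

section Six
variable {ω : ℝ → ℝ} {C : ℝ}

lemma simplex_nonempty {d : ℕ} [NeZero d] : (stdSimplex ℝ (Fin d)).Nonempty :=
  ⟨Pi.single 0 1, single_mem_stdSimplex ℝ 0⟩

lemma mem2 {a b : ℝ} (ha : 0 ≤ a) (hb : 0 ≤ b) (hab : a + b = 1) :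
    ![a, b] ∈ stdSimplex ℝ (Fin 2) := by
  constructor
  · intro i
    fin_cases i <;> simpa
  · rw [Fin.sum_univ_two]
    simpa using hab

lemma mem3 {a b c : ℝ} (ha : 0 ≤ a) (hb : 0 ≤ b) (hc : 0 ≤ c) (habc : a + b + c = 1) :
    ![a, b, c] ∈ stdSimplex ℝ (Fin 3) := by
  constructor
  · intro i
    fin_cases i <;> simpa
  · rw [Fin.sum_univ_three]
    simpa using habc

lemma smax2_eq (a b : ℝ) : smax ω ![a, b] =
    sSup ((fun q : Fin 2 → ℝ => q 0 * a + q 1 * b - (ω (q 0) + ω (q 1))) '' stdSimplex ℝ (Fin 2)) := by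
  rw [smax]
  congr 1
  have : (fun q : Fin 2 → ℝ => (∑ i, q i * ![a, b] i) - ∑ i, ω (q i))
      = fun q : Fin 2 → ℝ => q 0 * a + q 1 * b - (ω (q 0) + ω (q 1)) := by
    funext q
    simp [Fin.sum_univ_two]
  rw [this]

lemma bddAbove_obj {d : ℕ} {Φ : (Fin d → ℝ) → ℝ} (hΦ : ContinuousOn Φ (stdSimplex ℝ (Fin d)))
    (x : Fin d → ℝ) : BddAbove ((fun q => (∑ i, q i * x i) - Φ q) '' stdSimplex ℝ (Fin d)) := by
  have hlin : Continuous (fun q : Fin d → ℝ => ∑ i, q i * x i) :=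
    continuous_finset_sum _ fun i _ => (continuous_apply i).mul continuous_const
  exact (isCompact_stdSimplex ℝ (Fin d)).bddAbove_image (hlin.continuousOn.sub hΦ)

lemma le_smax2 (hcont : ContinuousOn ω (Set.Icc (0:ℝ) 1)) (a b : ℝ) {q : Fin 2 → ℝ}
    (hq : q ∈ stdSimplex ℝ (Fin 2)) :
    q 0 * a + q 1 * b - (ω (q 0) + ω (q 1)) ≤ smax ω ![a, b] := by
  rw [smax2_eq]
  have hb2 : BddAbove ((fun q : Fin 2 → ℝ => q 0 * a + q 1 * b - (ω (q 0) + ω (q 1))) ''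
      stdSimplex ℝ (Fin 2)) := by
    have := bddAbove_obj (phi2_cont hcont (d := 2)) ![a, b]
    have heq : (fun q : Fin 2 → ℝ => (∑ i, q i * ![a, b] i) - Phi2 ω q)
        = fun q : Fin 2 → ℝ => q 0 * a + q 1 * b - (ω (q 0) + ω (q 1)) := by
      funext q
      simp [Phi2, Fin.sum_univ_two]
    rwa [heq] at this
  exact le_csSup hb2 ⟨q, hq, rfl⟩

lemma smax2_exists_gt (a b : ℝ) {ε : ℝ} (hε : 0 < ε) :
    ∃ q ∈ stdSimplex ℝ (Fin 2),
      smax ω ![a, b] - ε < q 0 * a + q 1 * b - (ω (q 0) + ω (q 1)) := by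
  have hne : ((fun q : Fin 2 → ℝ => q 0 * a + q 1 * b - (ω (q 0) + ω (q 1))) ''
      stdSimplex ℝ (Fin 2)).Nonempty := (simplex_nonempty (d := 2)).image _
  have hlt : smax ω ![a, b] - ε < smax ω ![a, b] := by linarith
  rw [smax2_eq] at hlt
  obtain ⟨_, ⟨q, hq, rfl⟩, hgt⟩ := exists_lt_of_lt_csSup hne hlt
  exact ⟨q, hq, by rw [smax2_eq]; exact hgt⟩

lemma conj_phi1_eq (hcont : ContinuousOn ω (Set.Icc (0:ℝ) 1))
    (habs : ∀ t ∈ Set.Icc (0:ℝ) 1, |ω t| ≤ C) (x1 x2 x3 : ℝ) :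
    conj' (Phi1 ω) ![x1, x2, x3] = smax ω ![smax ω ![x1, x2], x3] := by
  set S := smax ω ![x1, x2] with hS
  apply le_antisymm
  · -- conj' Phi1 ≤ nested
    apply csSup_le ((simplex_nonempty (d := 3)).image _)
    rintro _ ⟨q, hq, rfl⟩
    dsimp only
    have hq0 := hq.1 0
    have hq1 := hq.1 1
    have hq2 := hq.1 2
    have hsum := sum3 hq
    have hobj : (∑ i, q i * ![x1, x2, x3] i) - Phi1 ω q
        = q 0 * x1 + q 1 * x2 + q 2 * x3 - (ω (q 2) + ω (q 0 + q 1) + pers ω (q 0) (q 1)) := by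
      rw [Phi1, Fin.sum_univ_three]
      simp
    rw [hobj]
    have claim1 : q 0 * x1 + q 1 * x2 - pers ω (q 0) (q 1) ≤ (q 0 + q 1) * S := by
      rcases eq_or_lt_of_le (by linarith : (0:ℝ) ≤ q 0 + q 1) with hp | hp
      · have h00 : q 0 = 0 := by linarith
        have h10 : q 1 = 0 := by linarith
        rw [h00, h10]
        simp [pers]
      · set p := q 0 + q 1 with hpdef
        have hpne : p ≠ 0 := ne_of_gt hp
        have hmem : ![q 0 / p, q 1 / p] ∈ stdSimplex ℝ (Fin 2) :=
          mem2 (div_nonneg hq0 (le_of_lt hp)) (div_nonneg hq1 (le_of_lt hp))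
            (by rw [← add_div, hpdef, div_self hpne])
        have hle := le_smax2 hcont x1 x2 hmem
        simp only [Matrix.cons_val_zero, Matrix.cons_val_one, Matrix.head_cons] at hle
        have hmul := mul_le_mul_of_nonneg_left hle (le_of_lt hp)
        have hexp : p * (q 0 / p * x1 + q 1 / p * x2 - (ω (q 0 / p) + ω (q 1 / p)))
            = q 0 * x1 + q 1 * x2 - pers ω (q 0) (q 1) := by
          rw [pers, ← hpdef]
          field_simp
          try ring
        rw [hexp] at hmul
        rw [← hS] at hmul
        exact hmul
    have houter : (q 0 + q 1) * S + q 2 * x3 - (ω (q 0 + q 1) + ω (q 2))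
        ≤ smax ω ![S, x3] := by
      have hmem : ![q 0 + q 1, q 2] ∈ stdSimplex ℝ (Fin 2) :=
        mem2 (by linarith) hq2 hsum
      have := le_smax2 hcont S x3 hmem
      simpa using this
    linarith
  · -- nested ≤ conj' Phi1
    rw [smax2_eq]
    apply csSup_le ((simplex_nonempty (d := 2)).image _)
    rintro _ ⟨r, hr, rfl⟩
    dsimp only
    have hr0 := hr.1 0
    have hr1 := hr.1 1
    have hrsum : r 0 + r 1 = 1 := by
      have := hr.2
      rwa [Fin.sum_univ_two] at this
    apply le_of_forall_pos_le_add
    intro ε hε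
    obtain ⟨s, hs, hsv⟩ := smax2_exists_gt (ω := ω) x1 x2 hε
    have hs0 := hs.1 0
    have hs1 := hs.1 1
    have hssum : s 0 + s 1 = 1 := by
      have := hs.2
      rwa [Fin.sum_univ_two] at this
    have hqmem : ![r 0 * s 0, r 0 * s 1, r 1] ∈ stdSimplex ℝ (Fin 3) :=
      mem3 (mul_nonneg hr0 hs0) (mul_nonneg hr0 hs1) hr1 (by nlinarith)
    have hbdd : BddAbove ((fun q => (∑ i, q i * ![x1, x2, x3] i) - Phi1 ω q) ''
        stdSimplex ℝ (Fin 3)) := bddAbove_obj (phi1_cont hcont habs) _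
    have hle := le_csSup hbdd ⟨_, hqmem, rfl⟩
    dsimp only at hle
    have hpers : pers ω (r 0 * s 0) (r 0 * s 1) = r 0 * (ω (s 0) + ω (s 1)) := by
      rcases eq_or_lt_of_le hr0 with h | h
      · rw [← h]
        simp [pers]
      · have hsum01 : r 0 * s 0 + r 0 * s 1 = r 0 := by nlinarith
        rw [pers, hsum01]
        have e0 : r 0 * s 0 / r 0 = s 0 := by field_simp
        have e1 : r 0 * s 1 / r 0 = s 1 := by field_simp
        rw [e0, e1]
    have hvalq : (∑ i, (![r 0 * s 0, r 0 * s 1, r 1] : Fin 3 → ℝ) i * ![x1, x2, x3] i)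
        - Phi1 ω ![r 0 * s 0, r 0 * s 1, r 1]
        = r 0 * s 0 * x1 + r 0 * s 1 * x2 + r 1 * x3
          - (ω (r 1) + ω (r 0) + r 0 * (ω (s 0) + ω (s 1))) := by
      rw [Phi1, Fin.sum_univ_three]
      have hsum01 : r 0 * s 0 + r 0 * s 1 = r 0 := by nlinarith
      simp only [Matrix.cons_val_zero, Matrix.cons_val_one, Matrix.head_cons,
        Matrix.cons_val_two, Matrix.tail_cons]
      rw [hsum01, hpers]
    rw [hvalq] at hle
    have hle' : r 0 * s 0 * x1 + r 0 * s 1 * x2 + r 1 * x3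
        - (ω (r 1) + ω (r 0) + r 0 * (ω (s 0) + ω (s 1)))
        ≤ conj' (Phi1 ω) ![x1, x2, x3] := hle
    have hobjs : S - ε < s 0 * x1 + s 1 * x2 - (ω (s 0) + ω (s 1)) := hsv
    have hr0S : r 0 * (S - ε) ≤ r 0 * (s 0 * x1 + s 1 * x2 - (ω (s 0) + ω (s 1))) :=
      mul_le_mul_of_nonneg_left (le_of_lt hobjs) hr0
    have hr0le1 : r 0 ≤ 1 := by linarith
    have hr0ε : r 0 * ε ≤ ε := by nlinarith
    calc r 0 * S + r 1 * x3 - (ω (r 0) + ω (r 1))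
        ≤ r 0 * s 0 * x1 + r 0 * s 1 * x2 + r 1 * x3
          - (ω (r 1) + ω (r 0) + r 0 * (ω (s 0) + ω (s 1))) + ε := by nlinarith
      _ ≤ conj' (Phi1 ω) ![x1, x2, x3] + ε := by linarith [hle']


section S7
variable {ω : ℝ → ℝ}

lemma omega_one (h0 : ω 0 = 0)
    (hkey : ∀ a b : ℝ, 0 ≤ a → 0 ≤ b → a + b ≤ 1 → ω a + ω b = ω (a+b) + pers ω a b) :
    ω 1 = 0 := by
  have h := hkey 1 0 zero_le_one le_rfl (by norm_num)
  have hp : pers ω 1 0 = ω 1 := by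
    rw [pers]
    norm_num [h0]
  rw [hp] at h
  rw [h0] at h
  norm_num at h
  linarith

lemma pers_smul {l a b : ℝ} (hl : 0 ≤ l) : pers ω (l*a) (l*b) = l * pers ω a b := by
  rcases eq_or_lt_of_le hl with h | h
  · rw [← h]
    simp [pers]
  · have hlne : l ≠ 0 := ne_of_gt h
    have hsum : l*a + l*b = l*(a+b) := by ring
    rw [pers, pers, hsum, mul_div_mul_left _ _ hlne, mul_div_mul_left _ _ hlne]
    ring

lemma additive_linear {ψ : ℝ → ℝ}
    (hadd : ∀ a b : ℝ, 0 ≤ a → 0 ≤ b → a + b ≤ 1 → ψ (a+b) = ψ a + ψ b)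
    (hc : ContinuousOn ψ (Set.Icc 0 1)) :
    ∀ t ∈ Set.Icc (0:ℝ) 1, ψ t = t * ψ 1 := by
  have h00 : ψ 0 = 0 := by
    have := hadd 0 0 le_rfl le_rfl (by norm_num)
    norm_num at this
    linarith
  have hk : ∀ n : ℕ, 0 < n → ∀ k : ℕ, k ≤ n → ψ ((k:ℝ) / n) = (k:ℝ) * ψ (1/n) := by
    intro n hn k
    induction k with
    | zero => intro _; simp [h00]
    | succ k ih =>
      intro hkn
      have hk' := ih (Nat.le_of_succ_le hkn)
      have hnR : (0:ℝ) < n := by exact_mod_cast hn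
      have hle : ((k:ℝ)+1)/n ≤ 1 := by
        rw [div_le_one hnR]
        exact_mod_cast hkn
      have hstep := hadd ((k:ℝ)/n) (1/n) (by positivity) (by positivity)
        (by rw [← add_div]; exact hle)
      have he : ((k:ℝ)+1)/n = (k:ℝ)/n + 1/n := by ring
      have hcast : ((k+1 : ℕ):ℝ) = (k:ℝ)+1 := by push_cast; ring
      rw [hcast, he, hstep, hk']
      ring
  have hq : ∀ n : ℕ, 0 < n → ∀ k : ℕ, k ≤ n → ψ ((k:ℝ)/n) = ((k:ℝ)/n) * ψ 1 := by
    intro n hn k hkn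
    have hnR : (0:ℝ) < n := by exact_mod_cast hn
    have h1 := hk n hn n le_rfl
    rw [div_self (ne_of_gt hnR)] at h1
    have h2 := hk n hn k hkn
    rw [h2, h1]
    field_simp
  intro t ht
  have hseq : Tendsto (fun n : ℕ => (⌊t * n⌋₊ : ℝ)/n) atTop (nhds t) :=
    (tendsto_nat_floor_mul_div_atTop ht.1).comp tendsto_natCast_atTop_atTop
  have hmem : ∀ n : ℕ, (⌊t * n⌋₊ : ℝ)/n ∈ Set.Icc (0:ℝ) 1 := by
    intro n
    rcases Nat.eq_zero_or_pos n with h | h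
    · simp [h]
    · have hnR : (0:ℝ) < n := by exact_mod_cast h
      constructor
      · positivity
      · rw [div_le_one hnR]
        have h1 : t * n ≤ (n:ℝ) := by nlinarith [ht.2, hnR]
        calc (⌊t * n⌋₊ : ℝ) ≤ t * n := Nat.floor_le (mul_nonneg ht.1 hnR.le)
          _ ≤ n := h1
  have hval : ∀ n : ℕ, 0 < n → ψ ((⌊t * n⌋₊ : ℝ)/n) = ((⌊t * n⌋₊ : ℝ)/n) * ψ 1 := by
    intro n hn
    have hnR : (0:ℝ) < n := by exact_mod_cast hn
    have hfl : ⌊t * n⌋₊ ≤ n := by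
      have h1 : t * n ≤ (n:ℝ) := by nlinarith [ht.2, hnR]
      calc ⌊t * n⌋₊ ≤ ⌊(n:ℝ)⌋₊ := Nat.floor_le_floor h1
        _ = n := Nat.floor_natCast n
    exact hq n hn _ hfl
  have h1 : Tendsto (fun n : ℕ => ψ ((⌊t * n⌋₊ : ℝ)/n)) atTop (nhds (ψ t)) :=
    ((hc t ht).tendsto).comp
      (tendsto_nhdsWithin_of_tendsto_nhds_of_eventually_within _ hseq
        (Eventually.of_forall hmem))
  have h2 : Tendsto (fun n : ℕ => ψ ((⌊t * n⌋₊ : ℝ)/n)) atTop (nhds (t * ψ 1)) := by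
    apply (hseq.mul_const (ψ 1)).congr'
    filter_upwards [eventually_gt_atTop 0] with n hn
    exact (hval n hn).symm
  exact tendsto_nhds_unique h1 h2

lemma mult_rule (h0 : ω 0 = 0) (hω1 : ω 1 = 0) (hcont : ContinuousOn ω (Set.Icc (0:ℝ) 1))
    (hkey : ∀ a b : ℝ, 0 ≤ a → 0 ≤ b → a + b ≤ 1 → ω a + ω b = ω (a+b) + pers ω a b) :
    ∀ l ∈ Set.Icc (0:ℝ) 1, ∀ t ∈ Set.Icc (0:ℝ) 1, ω (l*t) = l * ω t + t * ω l := by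
  intro l hl
  set ψ : ℝ → ℝ := fun t => ω (l*t) - l * ω t with hψ
  have hmaps : ∀ t ∈ Set.Icc (0:ℝ) 1, l * t ∈ Set.Icc (0:ℝ) 1 := by
    intro t ht
    exact ⟨mul_nonneg hl.1 ht.1, mul_le_one₀ hl.2 ht.1 ht.2⟩
  have hadd : ∀ a b : ℝ, 0 ≤ a → 0 ≤ b → a + b ≤ 1 → ψ (a+b) = ψ a + ψ b := by
    intro a b ha hb hab
    have key1 := hkey (l*a) (l*b) (mul_nonneg hl.1 ha) (mul_nonneg hl.1 hb)
      (by nlinarith [hl.1, hl.2])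
    have key2 := hkey a b ha hb hab
    have hps := pers_smul (ω := ω) (a := a) (b := b) hl.1
    have hsum : l*a + l*b = l*(a+b) := by ring
    show ω (l*(a+b)) - l * ω (a+b) = (ω (l*a) - l * ω a) + (ω (l*b) - l * ω b)
    rw [← hsum]
    linear_combination l * key2 - key1 - hps
  have hcψ : ContinuousOn ψ (Set.Icc (0:ℝ) 1) := by
    apply ContinuousOn.sub
    · exact hcont.comp ((continuous_const.mul continuous_id).continuousOn) hmaps
    · exact continuousOn_const.mul hcont
  intro t ht
  have := additive_linear hadd hcψ t ht
  simp only [hψ] at this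
  rw [mul_one, hω1] at this
  linarith [this]

end S7


section S8
variable {ω : ℝ → ℝ}


lemma final_form (h0 : ω 0 = 0) (hcont : ContinuousOn ω (Set.Icc (0:ℝ) 1))
    (hle0 : ∀ t ∈ Set.Icc (0:ℝ) 1, ω t ≤ 0)
    (hmult : ∀ l ∈ Set.Icc (0:ℝ) 1, ∀ t ∈ Set.Icc (0:ℝ) 1, ω (l*t) = l * ω t + t * ω l) :
    ∃ γ : ℝ, 0 ≤ γ ∧ ∀ t ∈ Set.Icc (0:ℝ) 1, ω t = γ * (t * Real.log t) := by
  set v : ℝ → ℝ := fun s => ω (Real.exp (-s)) * Real.exp s with hv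
  have hmem : ∀ s : ℝ, 0 ≤ s → Real.exp (-s) ∈ Set.Icc (0:ℝ) 1 := by
    intro s hs
    refine ⟨(Real.exp_pos _).le, ?_⟩
    rw [← Real.exp_zero]
    exact Real.exp_le_exp.2 (by linarith)
  have hvadd : ∀ s r : ℝ, 0 ≤ s → 0 ≤ r → v (s+r) = v s + v r := by
    intro s r hs hr
    have hm := hmult _ (hmem s hs) _ (hmem r hr)
    have he : Real.exp (-s) * Real.exp (-r) = Real.exp (-(s+r)) := by
      rw [← Real.exp_add]; ring_nf
    rw [he] at hm
    have h1 : Real.exp (-s) * Real.exp s = 1 := by rw [← Real.exp_add]; simp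
    have h2 : Real.exp (-r) * Real.exp r = 1 := by rw [← Real.exp_add]; simp
    have he2 : Real.exp (s+r) = Real.exp s * Real.exp r := Real.exp_add s r
    simp only [hv]
    rw [he2, hm]
    linear_combination (ω (Real.exp (-r)) * Real.exp r) * h1
      + (ω (Real.exp (-s)) * Real.exp s) * h2
  have hvcont : ContinuousOn v (Set.Ici (0:ℝ)) := by
    apply ContinuousOn.mul
    · exact hcont.comp ((Real.continuous_exp.comp continuous_neg).continuousOn)
        (fun s hs => hmem s hs)
    · exact Real.continuous_exp.continuousOn
  have hvlin : ∀ s : ℝ, 0 ≤ s → v s = s * v 1 := by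
    have hNlin : ∀ N : ℝ, 0 ≤ N → ∀ u ∈ Set.Icc (0:ℝ) 1, v (N * u) = u * v (N * 1) := by
      intro N hN
      apply additive_linear
      · intro a b ha hb hab
        have he : N*(a+b) = N*a + N*b := by ring
        rw [he]
        exact hvadd _ _ (mul_nonneg hN ha) (mul_nonneg hN hb)
      · exact hvcont.comp ((continuous_const.mul continuous_id).continuousOn)
          (fun u hu => mul_nonneg hN hu.1)
    intro s hs
    have hs1 : (0:ℝ) < s + 1 := by linarith
    have h1 : v s = (s/(s+1)) * v ((s+1) * 1) := by
      have := hNlin (s+1) hs1.le (s/(s+1))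
        ⟨by positivity, by rw [div_le_one hs1]; linarith⟩
      rw [show (s+1) * (s/(s+1)) = s by field_simp] at this
      exact this
    have h2 : v 1 = (1/(s+1)) * v ((s+1) * 1) := by
      have := hNlin (s+1) hs1.le (1/(s+1))
        ⟨by positivity, by rw [div_le_one hs1]; linarith⟩
      rw [show (s+1) * (1/(s+1)) = 1 by field_simp] at this
      exact this
    rw [h1, h2]
    field_simp
  refine ⟨-(v 1), ?_, ?_⟩
  · have hval : v 1 = ω (Real.exp (-1)) * Real.exp 1 := rfl
    have hneg := hle0 _ (hmem 1 zero_le_one)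
    have : v 1 ≤ 0 := by
      rw [hval]
      exact mul_nonpos_of_nonpos_of_nonneg hneg (Real.exp_pos 1).le
    linarith
  · intro t ht
    rcases eq_or_lt_of_le ht.1 with h | h
    · rw [← h, h0]
      simp
    · set s := -Real.log t with hsdef
      have hlog : Real.log t ≤ 0 := Real.log_nonpos ht.1 ht.2
      have hs : 0 ≤ s := by rw [hsdef]; linarith
      have hexp : Real.exp (-s) = t := by rw [hsdef, neg_neg, Real.exp_log h]
      have hvs := hvlin s hs
      have hval : v s = ω t * Real.exp s := by simp only [hv]; rw [hexp]
      have hexps : Real.exp s = t⁻¹ := by rw [hsdef, Real.exp_neg, Real.exp_log h]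
      have htne : t ≠ 0 := ne_of_gt h
      have heq : ω t * t⁻¹ = s * v 1 := by rw [← hexps, ← hval, hvs]
      have h6 : ω t = s * v 1 * t := by
        field_simp at heq
        linarith
      simp only [hsdef] at h6
      linear_combination h6
end S8


/-- if `ω : [0,1] → ℝ` is convex and lower semicontinuous with
`ω(0) = 0`, and the associated separable smoothed max operator is associative
(for triples), then `ω(t) = γ t log t` for some `γ ≥ 0`; i.e. `Ω` is a
nonnegative multiple of the negative entropy. -/
theorem stmt11 (ω : ℝ → ℝ)
    (hconv : ConvexOn ℝ (Set.Icc (0 : ℝ) 1) ω)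
    (hlsc : LowerSemicontinuousOn ω (Set.Icc (0 : ℝ) 1))
    (h0 : ω 0 = 0)
    (hassoc : ∀ x1 x2 x3 : ℝ, smax ω ![smax ω ![x1, x2], x3] = smax ω ![x1, x2, x3]) :
    ∃ γ : ℝ, 0 ≤ γ ∧ ∀ t ∈ Set.Icc (0 : ℝ) 1, ω t = γ * (t * Real.log t) := by
  have hcont : ContinuousOn ω (Set.Icc (0:ℝ) 1) := omega_cont hconv hlsc h0
  have habs : ∀ t ∈ Set.Icc (0:ℝ) 1, |ω t| ≤ |2 * ω (1/2) - max 0 (ω 1)| + |max 0 (ω 1)| :=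
    fun t ht => abs_bd hconv h0 ht
  have hsm : ∀ x : Fin 3 → ℝ, conj' (Phi1 ω) x = conj' (Phi2 ω) x := by
    intro x
    have hx : x = ![x 0, x 1, x 2] := by
      funext i
      fin_cases i <;> rfl
    rw [hx, conj_phi1_eq hcont habs, hassoc]
    rfl
  have heq : ∀ q ∈ stdSimplex ℝ (Fin 3), Phi1 ω q = Phi2 ω q := by
    intro q hq
    exact le_antisymm
      (conj_le_on_simplex (phi1_convex hconv) (phi1_cont hcont habs) (phi2_cont hcont) hsm hq)
      (conj_le_on_simplex (phi2_convex hconv) (phi2_cont hcont) (phi1_cont hcont habs)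
        (fun x => (hsm x).symm) hq)
  have hkey : ∀ a b : ℝ, 0 ≤ a → 0 ≤ b → a + b ≤ 1 → ω a + ω b = ω (a+b) + pers ω a b := by
    intro a b ha hb hab
    have hq : ![a, b, 1 - (a+b)] ∈ stdSimplex ℝ (Fin 3) :=
      mem3 ha hb (by linarith) (by ring)
    have h := heq _ hq
    simp only [Phi1, Phi2, Fin.sum_univ_three, Matrix.cons_val_zero, Matrix.cons_val_one,
      Matrix.head_cons, Matrix.cons_val_two, Matrix.tail_cons] at h
    linarith
  have hω1 : ω 1 = 0 := omega_one h0 hkey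
  have hmult := mult_rule h0 hω1 hcont hkey
  have hle0 : ∀ t ∈ Set.Icc (0:ℝ) 1, ω t ≤ 0 := by
    intro t ht
    have := chord' hconv h0 ht
    rw [hω1] at this
    simpa using this
  exact final_form h0 hcont hle0 hmult
end Six
end

section
/- Let N ≥ 2 and let E ⊆ {(i,j) : 1 ≤ j < i ≤ N} be the edge set of a DAG on nodes {1,…,N} in topological order, with parents P_i = {j : (i,j) ∈ E} nonempty for every i ≥ 2. Let Ω be a convex function bounded on probability simplices (one instance Ω_d per dimension d, of the form Ω_d(q) = Σ_i ω(q_i) for a fixed convex ω, or any family making each maxΩ convex and coordinatewise non-decreasing). Define v₁(θ) = 0 and v_i(θ) = maxΩ( (θ_{i,j} + v_j(θ))_{j ∈ P_i} ) for i = 2,…,N, where θ = (θ_{i,j})_{(i,j)∈E} ∈ ℝ^E. Then the smoothed value DPΩ(θ) = v_N(θ) is a convex function of θ on ℝ^E. -/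
/-- convexity of the smoothed dynamic program.  On a DAG on nodes
`{0, …, N-1}` in topological order with nonempty parent sets (except at the
start node `0`), if each smoothed max operator `M i` (over the parents of `i`)
is convex and coordinatewise non-decreasing, then the smoothed value
`DPΩ(θ) = v θ (N-1)` defined by the recursion
`v θ 0 = 0`, `v θ i = M i ((θ i j + v θ j)_{j ∈ P_i})`
is a convex function of the edge weights `θ`. -/
theorem stmt13 (N : ℕ) (hN : 2 ≤ N)
    (adj : Fin N → Fin N → Prop)
    (hadj : ∀ i j : Fin N, adj i j → j < i)
    (hpar : ∀ i : Fin N, i ≠ ⟨0, by omega⟩ → ∃ j, adj i j)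
    (M : ∀ i : Fin N, ({j : Fin N // adj i j} → ℝ) → ℝ)
    (hMconv : ∀ i, ConvexOn ℝ Set.univ (M i))
    (hMmono : ∀ i, Monotone (M i))
    (v : (Fin N → Fin N → ℝ) → Fin N → ℝ)
    (hv0 : ∀ θ, v θ ⟨0, by omega⟩ = 0)
    (hv : ∀ (θ : Fin N → Fin N → ℝ) (i : Fin N), i ≠ ⟨0, by omega⟩ →
      v θ i = M i (fun j => θ i j.1 + v θ j.1)) :
    ConvexOn ℝ Set.univ (fun θ : Fin N → Fin N → ℝ => v θ ⟨N - 1, by omega⟩) := by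
  have key : ∀ n : ℕ, ∀ i : Fin N, i.1 = n →
      ∀ θ₁ θ₂ : Fin N → Fin N → ℝ, ∀ a b : ℝ,
      0 ≤ a → 0 ≤ b → a + b = 1 →
      v (a • θ₁ + b • θ₂) i ≤ a * v θ₁ i + b * v θ₂ i := by
    intro n
    induction n using Nat.strong_induction_on with
    | _ n ih =>
      intro i hi θ₁ θ₂ a b ha hb hab
      by_cases h0 : i = ⟨0, by omega⟩
      · rw [h0]
        rw [hv0, hv0, hv0]
        linarith
      · rw [hv _ _ h0, hv _ _ h0, hv _ _ h0]
        have step1 : M i (fun j => (a • θ₁ + b • θ₂) i j.1 + v (a • θ₁ + b • θ₂) j.1)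
            ≤ M i (a • (fun j : {j : Fin N // adj i j} => θ₁ i j.1 + v θ₁ j.1)
                  + b • (fun j : {j : Fin N // adj i j} => θ₂ i j.1 + v θ₂ j.1)) := by
          apply hMmono
          intro j
          have hji : (j.1 : ℕ) < n := by
            have := hadj i j.1 j.2
            omega
          have := ih j.1 hji j.1 rfl θ₁ θ₂ a b ha hb hab
          simp only [Pi.add_apply, Pi.smul_apply, smul_eq_mul]
          linarith
        have step2 := (hMconv i).2 (Set.mem_univ
            (fun j : {j : Fin N // adj i j} => θ₁ i j.1 + v θ₁ j.1))
          (Set.mem_univ (fun j : {j : Fin N // adj i j} => θ₂ i j.1 + v θ₂ j.1))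
          ha hb hab
        simp only [smul_eq_mul] at step2 ⊢
        linarith
  constructor
  · exact convex_univ
  · intro θ₁ _ θ₂ _ a b ha hb hab
    simpa using key (N - 1) ⟨N - 1, by omega⟩ rfl θ₁ θ₂ a b ha hb hab
end
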